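/- arXiv:1902.03386 — 4 statements merged into one kernel-verified Lean document; each statement's English description precedes it below -/
import Mathlib

section
/- The map ψ_r sending a partition λ to the pair (μ, ν) defined by μ_i = λ_i − r·ν_i with ν_i = Σ_{j≥i} ⌊(λ_j − λ_{j+1})/r⌋ is a bijection from the set of all partitions to the Cartesian product of the set of r-kernels (partitions whose successive part differences are all less than r) and the set of all partitions. -/
open MvPowerSeries

/-- `f` encodes a partition: weakly decreasing with finitely many nonzero parts.
`f i` is the `(i+1)`-st part `λ_{i+1}`. -/
def PartitionFun (f : ℕ → ℕ) : Prop :=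
  (∀ i, f (i + 1) ≤ f i) ∧ ∃ N, ∀ i, N ≤ i → f i = 0

/-- The size `|λ|` of a partition. -/
noncomputable def psize (f : ℕ → ℕ) : ℕ := ∑ᶠ i, f i

/-- `conj f j` is the number of parts of `f` that are `> j`, i.e. the conjugate part `λ'_{j+1}`. -/
noncomputable def conj (f : ℕ → ℕ) (j : ℕ) : ℕ := {i | j < f i}.ncard

/-- The hook length of the cell in row `i+1`, column `j+1`:
`h = λ_{i+1} + λ'_{j+1} - (i+1) - (j+1) + 1`. -/
noncomputable def hookLen (f : ℕ → ℕ) (i j : ℕ) : ℕ := f i + conj f j - i - j - 1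

/-- The cell `(i+1, j+1)` is a bottom square: it lies in the diagram and has leg length 0,
i.e. `λ'_{j+1} = i + 1`. -/
noncomputable def bottomCell (f : ℕ → ℕ) (i j : ℕ) : Prop := j < f i ∧ conj f j = i + 1

/-- `ν_i = Σ_{j ≥ i} ⌊(λ_j − λ_{j+1})/r⌋` (0-based indexing). -/
noncomputable def nuF (r : ℕ) (f : ℕ → ℕ) : ℕ → ℕ :=
  fun i => ∑ᶠ j, if i ≤ j then (f j - f (j + 1)) / r else 0

/-- `μ_i = λ_i − r·ν_i`. -/
noncomputable def muF (r : ℕ) (f : ℕ → ℕ) : ℕ → ℕ :=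
  fun i => f i - r * nuF r f i

/-- An `r`-kernel: all successive part differences are `< r`. -/
def KernelFun (r : ℕ) (f : ℕ → ℕ) : Prop := ∀ i, f i - f (i + 1) < r

/-- An `r`-core: no hook length is divisible by `r`. -/
noncomputable def RCoreFun (r : ℕ) (f : ℕ → ℕ) : Prop :=
  ∀ i j, j < f i → ¬ r ∣ hookLen f i j

/-- `f` and `g` have the same `r`-core, expressed via the abacus/β-number characterisation:
for some `N` beyond the lengths of both partitions, the multisets of residues mod `r` of the
β-numbers `{λ_i + N − i : 1 ≤ i ≤ N}` of the two partitions coincide. -/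
def SameRCore (r : ℕ) (f g : ℕ → ℕ) : Prop :=
  ∃ N, (∀ i, N ≤ i → f i = 0) ∧ (∀ i, N ≤ i → g i = 0) ∧
    ∀ c, ((Finset.range N).filter fun i => (f i + N - i - 1) % r = c).card =
         ((Finset.range N).filter fun i => (g i + N - i - 1) % r = c).card

/-- `|H_r(λ)|`: the number of cells of `λ` whose hook length is divisible by `r`. -/
noncomputable def hrCard (r : ℕ) (f : ℕ → ℕ) : ℕ :=
  {p : ℕ × ℕ | p.2 < f p.1 ∧ r ∣ hookLen f p.1 p.2}.ncard

/-- `|H^{(b)}_r(λ)|`: the number of bottom squares of `λ` whose hook length is divisible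
by `r`. -/
noncomputable def botHrCard (r : ℕ) (f : ℕ → ℕ) : ℕ :=
  {p : ℕ × ℕ | bottomCell f p.1 p.2 ∧ r ∣ hookLen f p.1 p.2}.ncard

lemma nuF_eq_sum (r : ℕ) (f : ℕ → ℕ) {N : ℕ} (hN : ∀ i, N ≤ i → f i = 0) (i : ℕ) :
    nuF r f i = ∑ j ∈ Finset.range N, if i ≤ j then (f j - f (j + 1)) / r else 0 := by
  apply finsum_eq_finset_sum_of_support_subset
  intro j hj
  simp only [Function.mem_support, ne_eq] at hj
  by_contra hjN
  simp only [Finset.coe_range, Set.mem_Iio, not_lt] at hjN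
  apply hj
  rw [hN j hjN, hN (j + 1) (by omega)]
  simp

lemma nuF_succ (r : ℕ) (f : ℕ → ℕ) {N : ℕ} (hN : ∀ i, N ≤ i → f i = 0) (i : ℕ) :
    nuF r f i = (f i - f (i + 1)) / r + nuF r f (i + 1) := by
  have hM' : ∀ j, max N (i + 1) ≤ j → f j = 0 := fun j hj => hN j (by omega)
  rw [nuF_eq_sum r f hM' i, nuF_eq_sum r f hM' (i + 1)]
  have key : ∀ j ∈ Finset.range (max N (i + 1)),
      (if i ≤ j then (f j - f (j + 1)) / r else 0)
      = (if j = i then (f i - f (i + 1)) / r else 0)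
        + (if i + 1 ≤ j then (f j - f (j + 1)) / r else 0) := by
    intro j _
    by_cases h1 : i ≤ j
    · by_cases h2 : j = i
      · subst h2; simp
      · have h3 : i + 1 ≤ j := by omega
        simp [h1, h2, h3]
    · have h3 : ¬ (i + 1 ≤ j) := by omega
      simp [h1, h3, show j ≠ i by omega]
  rw [Finset.sum_congr rfl key, Finset.sum_add_distrib, Finset.sum_ite_eq']
  simp [show i < max N (i + 1) by omega]

lemma nuF_zero (r : ℕ) (f : ℕ → ℕ) {N : ℕ} (hN : ∀ i, N ≤ i → f i = 0) {i : ℕ}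
    (hi : N ≤ i) : nuF r f i = 0 := by
  apply finsum_eq_zero_of_forall_eq_zero
  intro j
  split_ifs with h
  · rw [hN j (by omega), hN (j + 1) (by omega)]; simp
  · rfl

lemma rnu_le (r : ℕ) {f : ℕ → ℕ} (hf : PartitionFun f) (i : ℕ) :
    r * nuF r f i ≤ f i := by
  obtain ⟨N, hN⟩ := hf.2
  obtain ⟨k, hk⟩ : ∃ k, N ≤ i + k := ⟨N, by omega⟩
  induction k generalizing i with
  | zero => rw [nuF_zero r f hN (by omega)]; simp
  | succ k ih =>
    by_cases hi : N ≤ i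
    · rw [nuF_zero r f hN hi]; simp
    · rw [nuF_succ r f hN i, Nat.mul_add]
      have h1 := ih (i + 1) (by omega)
      have h2 : r * ((f i - f (i + 1)) / r) ≤ f i - f (i + 1) := Nat.mul_div_le _ _
      have h3 := hf.1 i
      omega

/-- Substituting `f = g + r·h` with `g` an `r`-kernel gives `ν = h`. -/
lemma nuF_of_sum {r : ℕ} (hr : 0 < r) {g h : ℕ → ℕ} (hg : PartitionFun g)
    (hker : KernelFun r g) (hh : PartitionFun h) (i : ℕ) :
    nuF r (fun i => g i + r * h i) i = h i := by
  obtain ⟨Ng, hNg⟩ := hg.2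
  obtain ⟨Nh, hNh⟩ := hh.2
  set f : ℕ → ℕ := fun i => g i + r * h i with hfdef
  have hN : ∀ j, max Ng Nh ≤ j → f j = 0 := by
    intro j hj
    simp [hfdef, hNg j (by omega), hNh j (by omega)]
  have hterm : ∀ j, (f j - f (j + 1)) / r = h j - h (j + 1) := by
    intro j
    have h1 : g (j + 1) ≤ g j := hg.1 j
    have h2 : h (j + 1) ≤ h j := hh.1 j
    have h4 : f j - f (j + 1) = (g j - g (j + 1)) + r * (h j - h (j + 1)) := by
      obtain ⟨a, ha⟩ : ∃ a, h j = h (j + 1) + a := ⟨h j - h (j + 1), by omega⟩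
      simp only [hfdef, ha, Nat.mul_add]
      have h5 : h (j + 1) + a - h (j + 1) = a := by omega
      rw [h5]
      omega
    rw [h4, Nat.add_mul_div_left _ _ hr, Nat.div_eq_of_lt (hker j), Nat.zero_add]
  obtain ⟨k, hk⟩ : ∃ k, max Ng Nh ≤ i + k := ⟨max Ng Nh, by omega⟩
  clear hfdef
  induction k generalizing i with
  | zero =>
    rw [nuF_zero r f hN (by omega)]
    exact (hNh i (by omega)).symm
  | succ k ih =>
    by_cases hi : max Ng Nh ≤ i
    · rw [nuF_zero r f hN hi]
      exact (hNh i (by omega)).symm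
    · rw [nuF_succ r f hN i, hterm i, ih (i + 1) (by omega)]
      have := hh.1 i
      omega

/-- The map `ψ_r : λ ↦ (μ, ν)`, with `ν_i = Σ_{j≥i} ⌊(λ_j − λ_{j+1})/r⌋` and
`μ_i = λ_i − r·ν_i`, is a bijection from the set of all partitions onto the Cartesian product
of the set of `r`-kernels and the set of all partitions. -/
theorem stmt0 (r : ℕ) (hr : 0 < r) :
    Set.BijOn (fun f => (muF r f, nuF r f)) {f : ℕ → ℕ | PartitionFun f}
      ({g : ℕ → ℕ | PartitionFun g ∧ KernelFun r g} ×ˢ {h : ℕ → ℕ | PartitionFun h}) := by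
  constructor
  · -- MapsTo
    intro f hf
    simp only [Set.mem_setOf_eq] at hf
    obtain ⟨N, hN⟩ := hf.2
    have step : ∀ i, nuF r f i = (f i - f (i + 1)) / r + nuF r f (i + 1) :=
      nuF_succ r f hN
    have hle : ∀ i, r * nuF r f i ≤ f i := rnu_le r hf
    refine Set.mem_prod.2 ⟨⟨⟨?_, ?_⟩, ?_⟩, ⟨?_, ?_⟩⟩
    · -- μ weakly decreasing
      intro i
      have e1 := step i
      have e2 : r * ((f i - f (i + 1)) / r) ≤ f i - f (i + 1) := Nat.mul_div_le _ _
      have e3 := hle (i + 1)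
      have e4 := hf.1 i
      simp only [muF]
      rw [e1, Nat.mul_add]
      omega
    · -- μ eventually zero
      exact ⟨N, fun i hi => by simp [muF, hN i hi]⟩
    · -- μ is an r-kernel
      intro i
      have e1 := step i
      have e2 : r * ((f i - f (i + 1)) / r) + (f i - f (i + 1)) % r = f i - f (i + 1) :=
        Nat.div_add_mod _ _
      have e3 := hle (i + 1)
      have e4 := hf.1 i
      have e5 : (f i - f (i + 1)) % r < r := Nat.mod_lt _ hr
      have e6 := hle i
      simp only [muF]
      rw [e1, Nat.mul_add] at e6 ⊢
      omega
    · -- ν weakly decreasing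
      intro i
      show nuF r f (i + 1) ≤ nuF r f i
      rw [step i]
      exact Nat.le_add_left _ _
    · -- ν eventually zero
      exact ⟨N, fun i hi => nuF_zero r f hN hi⟩
  constructor
  · -- InjOn
    intro f hf f' hf' heq
    simp only [Set.mem_setOf_eq] at hf hf'
    have h1 : muF r f = muF r f' := congrArg Prod.fst heq
    have h2 : nuF r f = nuF r f' := congrArg Prod.snd heq
    funext i
    have e1 := rnu_le r hf i
    have e2 := rnu_le r hf' i
    have e3 : muF r f i = f i - r * nuF r f i := rfl
    have e4 : muF r f' i = f' i - r * nuF r f' i := rfl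
    have e5 : muF r f i = muF r f' i := congrFun h1 i
    have e6 : nuF r f i = nuF r f' i := congrFun h2 i
    rw [e3, e4, e6] at e5
    rw [e6] at e1
    omega
  · -- SurjOn
    intro p hp
    obtain ⟨⟨hg, hker⟩, hh⟩ := Set.mem_prod.1 hp
    simp only [Set.mem_setOf_eq] at hg hker hh
    obtain ⟨Ng, hNg⟩ := hg.2
    obtain ⟨Nh, hNh⟩ := hh.2
    refine ⟨fun i => p.1 i + r * p.2 i, ?_, ?_⟩
    · refine ⟨fun i => ?_, ⟨max Ng Nh, fun i hi => ?_⟩⟩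
      · exact Nat.add_le_add (hg.1 i) (Nat.mul_le_mul_left r (hh.1 i))
      · simp [hNg i (by omega), hNh i (by omega)]
    · have hnu : nuF r (fun i => p.1 i + r * p.2 i) = p.2 := by
        funext i
        exact nuF_of_sum hr hg hker hh i
      have hmu : muF r (fun i => p.1 i + r * p.2 i) = p.1 := by
        funext i
        simp only [muF, hnu]
        omega
      simp only [hmu, hnu]
end

section
/- For every positive integer r, the generating function for r-kernels with the exponent of z tracking the largest part satisfies: Σ_{λ an r-kernel} z^{λ_1} T^{|λ|} = (z^r T^r; T^r)_∞ / (zT; T)_∞, as an identity of formal power series. -/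
open MvPowerSeries

/-- The `(σ→₀ℕ)→ℚ` product topology on multivariate formal power series, so that the
infinite sums and products below are the (coefficientwise convergent) formal ones. -/
noncomputable instance mvTop (σ : Type*) : TopologicalSpace (MvPowerSeries σ ℚ) :=
  (inferInstance : TopologicalSpace ((σ →₀ ℕ) → ℚ))

/-- `(a;q)_∞ = Π_{j≥0} (1 - a q^j)`. -/
noncomputable def qPochInf {σ : Type*} (a q : MvPowerSeries σ ℚ) : MvPowerSeries σ ℚ :=
  ∏' j : ℕ, (1 - a * q ^ j)

/-!
Writing `d_j = λ_j - λ_{j+1}`, an `r`-kernel is the same thing as a finitely supported sequence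
`d` with all `d_j < r`, and then `λ_1 = Σ d_j` and `|λ| = Σ (j + 1) d_j`. So the weight of the
kernel is `∏_j (z T^{j+1})^{d_j}`, and summing over all such `d` expands the product
`∏_j Σ_{v < r} (z T^{j+1})^v = ∏_j (1 - (z T^{j+1})^r) / (1 - z T^{j+1})`.
-/

open Finset Filter Topology

instance (σ : Type*) : T2Space (MvPowerSeries σ ℚ) := WithPiTopology.instT2Space

instance (σ : Type*) : IsTopologicalRing (MvPowerSeries σ ℚ) :=
  WithPiTopology.instIsTopologicalRing σ ℚ

theorem Finset.prod_sum_eq_sum_finsupp {ι α R : Type*} [Zero α] [CommSemiring R]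
    (s : Finset ι) (t : ι → Finset α) (f : ι → α → R) :
    ∏ i ∈ s, ∑ a ∈ t i, f i a = ∑ d ∈ s.finsupp t, ∏ i ∈ s, f i (d i) := by
  classical
  rw [prod_sum, Finset.finsupp, sum_map]
  refine sum_congr rfl fun p _ => ?_
  rw [← prod_attach s]
  exact prod_congr rfl fun i _ => by rw [Function.Embedding.coeFn_mk, Finsupp.indicator_of_mem i.2]

theorem hasProd_sum_of_hasSum_finsuppProd {ι α R : Type*} [Zero α] [CommSemiring R]
    [TopologicalSpace R] {t : ι → Finset α} (ht : ∀ i, 0 ∈ t i) {f : ι → α → R}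
    (hf : ∀ i, f i 0 = 1) {L : R}
    (hL : HasSum (fun d : {d : ι →₀ α // ∀ i, d i ∈ t i} => d.1.prod f) L) :
    HasProd (fun i => ∑ a ∈ t i, f i a) L := by
  classical
  let F (s : Finset ι) : Finset {d : ι →₀ α // ∀ i, d i ∈ t i} := (s.finsupp t).subtype _
  have hF : Tendsto F atTop atTop := by
    refine tendsto_atTop_finset_of_monotone (fun s s' hss' d hd => ?_) fun d => ⟨d.1.support, ?_⟩
    · simp only [F, mem_subtype, mem_finsupp_iff] at hd ⊢
      exact ⟨hd.1.trans hss', fun i _ => d.2 i⟩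
    · simp only [F, mem_subtype, mem_finsupp_iff]
      exact ⟨subset_rfl, fun i _ => d.2 i⟩
  have hprod (s : Finset ι) : ∏ i ∈ s, ∑ a ∈ t i, f i a = ∑ d ∈ F s, d.1.prod f := by
    have hmem : ∀ d ∈ s.finsupp t, ∀ i, d i ∈ t i := by
      intro d hd i
      rw [mem_finsupp_iff] at hd
      by_cases hi : i ∈ s
      · exact hd.2 i hi
      · rw [Finsupp.notMem_support_iff.1 fun h => hi (hd.1 h)]
        exact ht i
    rw [prod_sum_eq_sum_finsupp, sum_subtype_of_mem (fun d => d.prod f) hmem]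
    exact sum_congr rfl fun d hd =>
      (Finsupp.prod_of_support_subset _ (mem_finsupp_iff.1 hd).1 _ fun i _ => hf i).symm
  simp only [HasProd, hprod]
  exact hL.comp hF

def ofDiffs (d : ℕ →₀ ℕ) (j : ℕ) : ℕ := d.sum fun k v => if j ≤ k then v else 0

lemma ofDiffs_eq_add (d : ℕ →₀ ℕ) (j : ℕ) : ofDiffs d j = d j + ofDiffs d (j + 1) := by
  classical
  have hsplit (k v : ℕ) :
      (if j ≤ k then v else 0) = (if k = j then v else 0) + if j + 1 ≤ k then v else 0 := by
    split_ifs <;> omega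
  simp only [ofDiffs, hsplit, Finsupp.sum_add, Finsupp.sum_ite_self_eq']

lemma ofDiffs_eq_zero (d : ℕ →₀ ℕ) {j : ℕ} (h : d.support ⊆ range j) : ofDiffs d j = 0 :=
  sum_eq_zero fun k hk => if_neg (by have := mem_range.1 (h hk); omega)

lemma ofDiffs_zero (d : ℕ →₀ ℕ) : ofDiffs d 0 = d.degree := by
  simp [ofDiffs, Finsupp.sum, Finsupp.degree_apply]

lemma psize_ofDiffs (d : ℕ →₀ ℕ) : psize (ofDiffs d) = Finsupp.weight (· + 1) d := by
  obtain ⟨n, hn⟩ := d.support.exists_nat_subset_range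
  have hsupp : Function.support (ofDiffs d) ⊆ range n := fun i hi => by
    by_contra h
    exact hi (ofDiffs_eq_zero d (hn.trans (range_subset_range.2 (by simpa using h))))
  rw [psize, finsum_eq_sum_of_support_subset _ hsupp, Finsupp.weight_apply]
  simp only [ofDiffs, Finsupp.sum]
  rw [sum_comm]
  refine sum_congr rfl fun k hk => ?_
  have hfilter : {i ∈ range n | i ≤ k} = range (k + 1) := by
    ext i
    simp only [mem_filter, mem_range]
    have := mem_range.1 (hn hk)
    omega
  rw [← sum_filter, hfilter, sum_const, card_range, smul_eq_mul, smul_eq_mul, mul_comm]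

lemma partitionFun_ofDiffs (d : ℕ →₀ ℕ) : PartitionFun (ofDiffs d) := by
  obtain ⟨n, hn⟩ := d.support.exists_nat_subset_range
  refine ⟨fun i => by have := ofDiffs_eq_add d i; omega, n, fun i hi => ofDiffs_eq_zero d ?_⟩
  exact hn.trans (range_subset_range.2 hi)

noncomputable def diffs (f : ℕ → ℕ) (hf : ∃ N, ∀ i, N ≤ i → f i = 0) : ℕ →₀ ℕ :=
  Finsupp.ofSupportFinite (fun j => f j - f (j + 1)) <| by
    obtain ⟨N, hN⟩ := hf
    refine (Set.finite_Iio N).subset fun j hj => ?_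
    by_contra h
    exact hj (by simp [hN j (not_lt.1 h), hN (j + 1) (by simp only [Set.mem_Iio] at h; omega)])

lemma diffs_apply (f : ℕ → ℕ) (hf : ∃ N, ∀ i, N ≤ i → f i = 0) (j : ℕ) :
    diffs f hf j = f j - f (j + 1) :=
  congrFun Finsupp.ofSupportFinite_coe j

lemma diffs_ofDiffs (d : ℕ →₀ ℕ) : diffs (ofDiffs d) (partitionFun_ofDiffs d).2 = d := by
  ext j
  rw [diffs_apply, ofDiffs_eq_add d j]
  omega

lemma eq_of_eq_add_succ {a b c : ℕ → ℕ} (ha : ∀ j, a j = c j + a (j + 1))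
    (hb : ∀ j, b j = c j + b (j + 1)) {N : ℕ} (haN : ∀ j, N ≤ j → a j = 0)
    (hbN : ∀ j, N ≤ j → b j = 0) : a = b := by
  suffices ∀ k j, N ≤ j + k → a j = b j from funext fun j => this N j (by omega)
  intro k
  induction k with
  | zero => exact fun j hj => by rw [haN j hj, hbN j hj]
  | succ k ih => exact fun j hj => by rw [ha, hb, ih (j + 1) (by omega)]

lemma ofDiffs_diffs {f : ℕ → ℕ} (hf : PartitionFun f) : ofDiffs (diffs f hf.2) = f := by
  obtain ⟨hmono, N, hN⟩ := hf
  refine eq_of_eq_add_succ (ofDiffs_eq_add _) (fun j => ?_) (fun j hj => ofDiffs_eq_zero _ ?_) hN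
  · rw [diffs_apply]
    have := hmono j
    omega
  · intro k hk
    rw [Finsupp.mem_support_iff, diffs_apply] at hk
    rw [mem_range]
    by_contra h
    exact hk (by rw [hN k (by omega), hN (k + 1) (by omega)]; rfl)

noncomputable def kernelEquiv (r : ℕ) :
    {d : ℕ →₀ ℕ // ∀ j, d j ∈ range r} ≃ {f : ℕ → ℕ // PartitionFun f ∧ KernelFun r f} where
  toFun d := ⟨ofDiffs d.1, partitionFun_ofDiffs d.1, fun i => by
    have := ofDiffs_eq_add d.1 i
    have := mem_range.1 (d.2 i)
    omega⟩
  invFun f := ⟨diffs f.1 f.2.1.2, fun j => by rw [diffs_apply, mem_range]; exact f.2.2 j⟩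
  left_inv d := Subtype.ext (diffs_ofDiffs d.1)
  right_inv f := Subtype.ext (ofDiffs_diffs f.2.1)

noncomputable def zT (j : ℕ) : MvPowerSeries (Fin 2) ℚ := X 0 * X 1 ^ (j + 1)

lemma finsuppProd_zT_pow (d : ℕ →₀ ℕ) :
    (d.prod fun j v => zT j ^ v) = X 0 ^ d.degree * X 1 ^ Finsupp.weight (· + 1) d := by
  simp only [Finsupp.prod, zT, mul_pow, prod_mul_distrib, ← pow_mul, prod_pow_eq_pow_sum,
    Finsupp.degree_apply, Finsupp.weight_apply, Finsupp.sum, smul_eq_mul, mul_comm]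

lemma finite_setOf_weight_succ_le (n : ℕ) :
    {d : ℕ →₀ ℕ | Finsupp.weight (· + 1) d ≤ n}.Finite := by
  refine ((range n).finsupp fun _ => range (n + 1)).finite_toSet.subset fun d hd => ?_
  rw [Set.mem_ofPred_eq] at hd
  rw [mem_coe, mem_finsupp_iff]
  refine ⟨fun k hk => mem_range.2 ?_, fun k _ => mem_range.2 ?_⟩
  · have := Finsupp.le_weight_of_ne_zero' (· + 1) (Finsupp.mem_support_iff.1 hk)
    omega
  · have := Finsupp.le_weight (· + 1) (Nat.succ_ne_zero k) d
    omega

lemma summable_finsuppProd_zT_pow (P : (ℕ →₀ ℕ) → Prop) :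
    Summable fun d : {d // P d} => d.1.prod fun j v => zT j ^ v := by
  refine WithPiTopology.summable_iff_summable_coeff.2 fun e => summable_of_hasFiniteSupport ?_
  refine ((finite_setOf_weight_succ_le (e 1)).preimage Subtype.val_injective.injOn).subset ?_
  intro d hd
  simp only [Function.mem_support, finsuppProd_zT_pow, X_pow_eq, monomial_mul_monomial,
    coeff_monomial, ne_eq, ite_eq_right_iff, Classical.not_imp] at hd
  simp [hd.1]

lemma order_zT (j : ℕ) : (zT j).order = (j + 2 : ℕ) := by
  rw [zT, X_pow_eq, X, monomial_mul_monomial, one_mul, order_monomial_of_ne_zero one_ne_zero]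
  simp only [map_add, Finsupp.degree_single]
  push_cast
  ring

lemma multipliable_one_sub_zT : Multipliable fun j => 1 - zT j := by
  have h : Tendsto (fun j => (-zT j).order) atTop (𝓝 ⊤) := by
    refine ENat.tendsto_nhds_top_iff_natCast_lt.2 fun n => eventually_atTop.2 ⟨n, fun j hj => ?_⟩
    rw [order_neg, order_zT]
    exact_mod_cast (by omega : n < j + 2)
  simp only [sub_eq_add_neg]
  exact WithPiTopology.multipliable_one_add_of_tendsto_order_atTop_nhds_top h

lemma constantCoeff_tprod_one_sub_zT : constantCoeff (∏' j, (1 - zT j)) = 1 := by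
  refine (multipliable_one_sub_zT.hasProd.map constantCoeff
    (WithPiTopology.continuous_constantCoeff ℚ)).unique ?_
  simp [Function.comp_def, zT]

theorem hasProd_geom_sum_zT {r : ℕ} (hr : 0 < r) :
    HasProd (fun j => ∑ v ∈ range r, zT j ^ v)
      (∑' lam : {f : ℕ → ℕ // PartitionFun f ∧ KernelFun r f},
        (X 0 : MvPowerSeries (Fin 2) ℚ) ^ (lam.1 0) * (X 1) ^ psize lam.1) := by
  refine hasProd_sum_of_hasSum_finsuppProd (fun _ => mem_range.2 hr) (fun _ => pow_zero _) ?_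
  have hw (d : {d : ℕ →₀ ℕ // ∀ j, d j ∈ range r}) : (d.1.prod fun j v => zT j ^ v) =
      X 0 ^ (kernelEquiv r d).1 0 * X 1 ^ psize (kernelEquiv r d).1 := by
    simp [kernelEquiv, ofDiffs_zero, psize_ofDiffs, finsuppProd_zT_pow]
  rw [← (kernelEquiv r).tsum_eq, ← tsum_congr hw]
  exact (summable_finsuppProd_zT_pow _).hasSum

/-- `Σ_{λ an r-kernel} z^{λ_1} T^{|λ|} = (z^r T^r; T^r)_∞ / (zT; T)_∞`. -/
theorem stmt4 (r : ℕ) (hr : 0 < r) :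
    (∑' lam : {f : ℕ → ℕ // PartitionFun f ∧ KernelFun r f},
        (X 0 : MvPowerSeries (Fin 2) ℚ) ^ (lam.1 0) * (X 1) ^ psize lam.1) =
      qPochInf ((X 0 : MvPowerSeries (Fin 2) ℚ) ^ r * (X 1) ^ r) ((X 1) ^ r) *
        (qPochInf ((X 0 : MvPowerSeries (Fin 2) ℚ) * X 1) (X 1))⁻¹ := by
  have hC := (hasProd_geom_sum_zT hr).mul multipliable_one_sub_zT.hasProd
  simp only [geom_sum_mul_neg] at hC
  have hnum : qPochInf ((X 0 : MvPowerSeries (Fin 2) ℚ) ^ r * X 1 ^ r) (X 1 ^ r) =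
      ∏' j, (1 - zT j ^ r) := tprod_congr fun j => by rw [zT]; ring
  have hden : qPochInf ((X 0 : MvPowerSeries (Fin 2) ℚ) * X 1) (X 1) = ∏' j, (1 - zT j) :=
    tprod_congr fun j => by rw [zT]; ring
  rw [hnum, hden, hC.tprod_eq, mul_assoc, MvPowerSeries.mul_inv_cancel _
    (by rw [constantCoeff_tprod_one_sub_zT]; exact one_ne_zero), mul_one]
end

section
/- If λ and η are partitions with λ_i ≡ η_i (mod r) for all i, then λ and η have the same r-core. -/
open MvPowerSeries

theorem Nat.ModEq.add_sub_sub_right {r a b N i : ℕ} (h : a ≡ b [MOD r]) (hi : i < N) :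
    a + N - i - 1 ≡ b + N - i - 1 [MOD r] := by
  have shift (x : ℕ) : x + N - i - 1 = x + (N - i - 1) := by omega
  rw [shift a, shift b]
  exact h.add_right _

theorem stmt8_general (r : ℕ) (f g : ℕ → ℕ) (hf : PartitionFun f) (hg : PartitionFun g)
    (hcong : ∀ i, f i % r = g i % r) : SameRCore r f g := by
  obtain ⟨-, N₁, hN₁⟩ := hf
  obtain ⟨-, N₂, hN₂⟩ := hg
  refine ⟨max N₁ N₂, fun i hi => hN₁ i (le_of_max_le_left hi),
    fun i hi => hN₂ i (le_of_max_le_right hi), fun c => ?_⟩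
  congr 1
  refine Finset.filter_congr fun i hi => ?_
  have hβ : f i + max N₁ N₂ - i - 1 ≡ g i + max N₁ N₂ - i - 1 [MOD r] :=
    Nat.ModEq.add_sub_sub_right (hcong i) (Finset.mem_range.mp hi)
  rw [hβ]

/-- If `λ_i ≡ η_i (mod r)` for all `i`, then `λ` and `η` have the same
`r`-core. -/
theorem stmt8 (r : ℕ) (hr : 0 < r) (f g : ℕ → ℕ) (hf : PartitionFun f) (hg : PartitionFun g)
    (hcong : ∀ i, f i % r = g i % r) : SameRCore r f g :=
  stmt8_general r f g hf hg hcong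
end

section
/- If ψ_r(λ) = (μ, ν) with μ_i = λ_i − r·ν_i and ν_i = Σ_{j≥i} ⌊(λ_j − λ_{j+1})/r⌋, then λ and μ have the same r-core. -/
open MvPowerSeries

theorem Antitone.sum_Ico_tsub {f : ℕ → ℕ} (hf : Antitone f) {i n : ℕ} (hin : i ≤ n) :
    ∑ j ∈ Finset.Ico i n, (f j - f (j + 1)) = f i - f n := by
  induction n, hin using Nat.le_induction with
  | base => simp
  | succ n hin ih =>
    rw [Finset.sum_Ico_succ_top hin, ih]
    have := hf hin
    have := hf (Nat.le_add_right n 1)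
    omega

theorem PartitionFun.antitone {f : ℕ → ℕ} (hf : PartitionFun f) : Antitone f :=
  antitone_nat_of_succ_le hf.1

theorem sameRCore_of_modEq {r N : ℕ} {f g : ℕ → ℕ} (hf : ∀ i, N ≤ i → f i = 0)
    (hg : ∀ i, N ≤ i → g i = 0) (hfg : ∀ i, f i ≡ g i [MOD r]) : SameRCore r f g := by
  refine ⟨N, hf, hg, fun c => congrArg Finset.card (Finset.filter_congr fun i hi => ?_)⟩
  have hiN : i < N := Finset.mem_range.mp hi
  have hbeta : ∀ a, a + N - i - 1 = a + (N - i - 1) := fun a => by omega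
  rw [hbeta, hbeta, (hfg i).add_right (N - i - 1)]

theorem nuF_eq_sum_Ico {r N : ℕ} {f : ℕ → ℕ} (hN : ∀ i, N ≤ i → f i = 0) (i : ℕ) :
    nuF r f i = ∑ j ∈ Finset.Ico i N, (f j - f (j + 1)) / r := by
  rw [nuF, finsum_eq_finsetSum_of_support_subset (s := Finset.range N), ← Finset.sum_filter]
  · congr 1
    ext j
    simp only [Finset.mem_filter, Finset.mem_range, Finset.mem_Ico]
    tauto
  · intro j hj
    by_contra hjN
    simp only [Finset.coe_range, Set.mem_Iio, not_lt] at hjN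
    simp [hN j hjN, hN (j + 1) (by omega)] at hj

theorem mul_nuF_le {r : ℕ} {f : ℕ → ℕ} (hf : PartitionFun f) (i : ℕ) : r * nuF r f i ≤ f i := by
  obtain ⟨N, hN⟩ := hf.2
  have hN' : ∀ j, max i N ≤ j → f j = 0 := fun j hj => hN j (le_of_max_le_right hj)
  calc r * nuF r f i = ∑ j ∈ Finset.Ico i (max i N), r * ((f j - f (j + 1)) / r) := by
        rw [nuF_eq_sum_Ico hN', Finset.mul_sum]
    _ ≤ ∑ j ∈ Finset.Ico i (max i N), (f j - f (j + 1)) :=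
        Finset.sum_le_sum fun j _ => Nat.mul_div_le _ _
    _ = f i - f (max i N) := hf.antitone.sum_Ico_tsub (le_max_left i N)
    _ ≤ f i := Nat.sub_le _ _

theorem muF_add_mul_nuF {r : ℕ} {f : ℕ → ℕ} (hf : PartitionFun f) (i : ℕ) :
    muF r f i + r * nuF r f i = f i :=
  Nat.sub_add_cancel (mul_nuF_le hf i)

theorem muF_modEq {r : ℕ} {f : ℕ → ℕ} (hf : PartitionFun f) (i : ℕ) :
    muF r f i ≡ f i [MOD r] := by
  rw [Nat.ModEq, ← muF_add_mul_nuF hf i, Nat.add_mul_mod_self_left]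

theorem muF_eq_zero {r i : ℕ} {f : ℕ → ℕ} (hfi : f i = 0) : muF r f i = 0 := by
  simp [muF, hfi]

theorem stmt9_general (r : ℕ) (f : ℕ → ℕ) (hf : PartitionFun f) :
    SameRCore r f (muF r f) := by
  obtain ⟨N, hN⟩ := hf.2
  exact sameRCore_of_modEq hN (fun i hi => muF_eq_zero (hN i hi)) fun i => (muF_modEq hf i).symm

/-- If `ψ_r(λ) = (μ, ν)` then `λ` and `μ` have the same `r`-core. -/
theorem stmt9 (r : ℕ) (hr : 0 < r) (f : ℕ → ℕ) (hf : PartitionFun f) :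
    SameRCore r f (muF r f) :=
  stmt9_general r f hf
end
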